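/- arXiv:2011.00783 — 3 statements merged into one kernel-verified Lean document; each statement's English description precedes it below -/
import Mathlib

section
/- Let E : ℝ^d → L(ℝ^d) be a map into symmetric matrices which is Lipschitz with constant L, and suppose all eigenvalues of E(x) are at least a > 1/2 for every x. Then for every δ > 0 there exist constants C, C̃ > 0 such that for all r ∈ (0,1) and all x, y ∈ ℝ^d: ‖r^{E(x)} − r^{E(y)}‖ ≤ C ‖E(x) − E(y)‖ r^{a−δ} ≤ C̃ ‖x − y‖ r^{a−δ}. -/
/-!
Write `r^A = exp (t • A)` with `t = log r ≤ 0`. The map `s ↦ exp (s • A) * exp ((t - s) • B)` runs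
from `r^B` at `s = 0` to `r^A` at `s = t` and has derivative `exp (s • A) * (A - B) * exp ((t - s) • B)`
(Duhamel). By the spectral theorem `‖exp (s • A)‖ ≤ exp (s a)` for `s ≤ 0`, so the derivative has norm
at most `‖A - B‖ r^a` and `‖r^A - r^B‖ ≤ |log r| ‖A - B‖ r^a`. Finally `|log r| r^δ ≤ 1/δ` trades the
logarithm for the loss `r^(-δ)`.
-/

open Matrix MeasureTheory
open scoped ENNReal

noncomputable def toCLM {d : ℕ} (A : Matrix (Fin d) (Fin d) ℝ) :
    EuclideanSpace ℝ (Fin d) →L[ℝ] EuclideanSpace ℝ (Fin d) :=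
  LinearMap.toContinuousLinearMap (Matrix.toEuclideanLin A)

/-- `mexp A r` is the matrix power `r^A := exp(A log r)`, acting on Euclidean space,
so that `‖mexp A r‖` is the operator norm induced by the Euclidean norm. -/
noncomputable def mexp {d : ℕ} (A : Matrix (Fin d) (Fin d) ℝ) (r : ℝ) :
    EuclideanSpace ℝ (Fin d) →L[ℝ] EuclideanSpace ℝ (Fin d) :=
  NormedSpace.exp (Real.log r • toCLM A)

open NormedSpace Set

theorem norm_exp_smul_sub_exp_smul_le {𝔸 : Type*} [NormedRing 𝔸] [NormedAlgebra ℝ 𝔸]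
    [CompleteSpace 𝔸] {P Q : 𝔸} {a t : ℝ}
    (hP : ∀ s ≤ 0, ‖exp (s • P)‖ ≤ Real.exp (s * a))
    (hQ : ∀ s ≤ 0, ‖exp (s • Q)‖ ≤ Real.exp (s * a)) (ht : t ≤ 0) :
    ‖exp (t • P) - exp (t • Q)‖ ≤ |t| * ‖P - Q‖ * Real.exp (t * a) := by
  let f : ℝ → 𝔸 := fun s => exp (s • P) * exp ((t - s) • Q)
  have hf : ∀ s, HasDerivAt f (exp (s • P) * (P - Q) * exp ((t - s) • Q)) s := by
    intro s
    have hQ' := (hasDerivAt_exp_smul_const' Q (t - s)).scomp s ((hasDerivAt_id s).const_sub t)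
    convert (hasDerivAt_exp_smul_const P s).mul hQ' using 1
    · rfl
    · simp only [Function.comp_apply, neg_smul, one_smul, mul_neg]
      noncomm_ring
  have hbound : ∀ s ∈ Ico t 0, ‖exp (s • P) * (P - Q) * exp ((t - s) • Q)‖
      ≤ ‖P - Q‖ * Real.exp (t * a) := by
    rintro s ⟨hts, hs0⟩
    calc _ ≤ ‖exp (s • P)‖ * ‖P - Q‖ * ‖exp ((t - s) • Q)‖ := norm_mul₃_le
      _ ≤ Real.exp (s * a) * ‖P - Q‖ * Real.exp ((t - s) * a) := by
          gcongr
          · exact hP s hs0.le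
          · exact hQ _ (by linarith)
      _ = ‖P - Q‖ * Real.exp (t * a) := by rw [mul_right_comm, ← Real.exp_add]; ring_nf
  have hmvt := norm_image_sub_le_of_norm_deriv_le_segment'
    (fun s _ => (hf s).hasDerivWithinAt) hbound 0 ⟨ht, le_rfl⟩
  simp only [f, zero_smul, sub_zero, sub_self, exp_zero, one_mul, mul_one, zero_sub] at hmvt
  rw [norm_sub_rev, abs_of_nonpos ht]
  linarith

open scoped Matrix.Norms.L2Operator in
theorem norm_exp_smul_toCLM {d : ℕ} {A : Matrix (Fin d) (Fin d) ℝ} (hA : A.IsHermitian) (t : ℝ) :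
    ‖exp (t • toCLM A)‖ = ‖fun i => Real.exp (t * hA.eigenvalues i)‖ := by
  -- `map_exp` wants a normed `ℚ`-algebra; `exp` itself does not depend on the chosen structure.
  let +nondep : NormedAlgebra ℚ (Matrix (Fin d) (Fin d) ℝ) := .restrictScalars ℚ ℝ _
  set U := hA.eigenvectorUnitary
  have hCLM : Continuous (toEuclideanCLM (n := Fin d) (𝕜 := ℝ)) :=
    LinearMap.continuous_of_finiteDimensional
      (toEuclideanCLM (n := Fin d) (𝕜 := ℝ)).toAlgEquiv.toLinearMap
  have hconj : Continuous (Unitary.conjStarAlgAut ℝ (Matrix (Fin d) (Fin d) ℝ) U) :=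
    LinearMap.continuous_of_finiteDimensional
      (Unitary.conjStarAlgAut ℝ (Matrix (Fin d) (Fin d) ℝ) U).toAlgEquiv.toLinearMap
  have hsmul : t • toCLM A =
      toEuclideanCLM (𝕜 := ℝ) (Unitary.conjStarAlgAut ℝ _ U (diagonal (t • hA.eigenvalues))) := by
    rw [diagonal_smul, map_smul, map_smul]
    congr 1
    conv_lhs => rw [hA.spectral_theorem]
    rfl
  rw [hsmul, ← map_exp _ hCLM, l2_opNorm_toEuclideanCLM, ← map_exp _ hconj,
    Unitary.conjStarAlgAut_apply, ← Unitary.coe_star, CStarRing.norm_mul_coe_unitary,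
    CStarRing.norm_coe_unitary_mul, exp_diagonal, l2_opNorm_diagonal, Pi.exp_def,
    Real.exp_eq_exp_ℝ]
  rfl

theorem norm_exp_smul_toCLM_le {d : ℕ} {A : Matrix (Fin d) (Fin d) ℝ} (hA : A.IsHermitian)
    {a : ℝ} (heig : ∀ i, a ≤ hA.eigenvalues i) {t : ℝ} (ht : t ≤ 0) :
    ‖exp (t • toCLM A)‖ ≤ Real.exp (t * a) := by
  rw [norm_exp_smul_toCLM hA, pi_norm_le_iff_of_nonneg (Real.exp_pos _).le]
  intro i
  rw [Real.norm_eq_abs, abs_of_pos (Real.exp_pos _)]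
  exact Real.exp_le_exp.2 (mul_le_mul_of_nonpos_left (heig i) ht)

theorem norm_mexp_sub_mexp_le {d : ℕ} {A B : Matrix (Fin d) (Fin d) ℝ} (hA : A.IsHermitian)
    (hB : B.IsHermitian) {a : ℝ} (hAa : ∀ i, a ≤ hA.eigenvalues i)
    (hBa : ∀ i, a ≤ hB.eigenvalues i) {r : ℝ} (hr0 : 0 < r) (hr1 : r ≤ 1) :
    ‖mexp A r - mexp B r‖ ≤ |Real.log r| * ‖toCLM A - toCLM B‖ * r ^ a := by
  rw [Real.rpow_def_of_pos hr0]
  exact norm_exp_smul_sub_exp_smul_le (fun s hs => norm_exp_smul_toCLM_le hA hAa hs)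
    (fun s hs => norm_exp_smul_toCLM_le hB hBa hs) (Real.log_nonpos hr0.le hr1)

theorem abs_log_mul_rpow_le {r a δ : ℝ} (hr0 : 0 < r) (hr1 : r ≤ 1) (hδ : 0 < δ) :
    |Real.log r| * r ^ a ≤ 1 / δ * r ^ (a - δ) := by
  have hlog : |Real.log r| * r ^ δ ≤ 1 / δ := by
    simpa [abs_mul, abs_of_pos (Real.rpow_pos_of_pos hr0 δ)]
      using (Real.abs_log_mul_self_rpow_lt r δ hr0 hr1 hδ).le
  calc |Real.log r| * r ^ a = |Real.log r| * r ^ δ * r ^ (a - δ) := by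
        rw [mul_assoc, ← Real.rpow_add hr0, add_sub_cancel]
    _ ≤ 1 / δ * r ^ (a - δ) := by gcongr

theorem stmt2_general (d : ℕ) (E : EuclideanSpace ℝ (Fin d) → Matrix (Fin d) (Fin d) ℝ)
    (hsym : ∀ x, (E x).IsHermitian) (L : ℝ)
    (hLip : ∀ x y, ‖toCLM (E x) - toCLM (E y)‖ ≤ L * ‖x - y‖)
    (a : ℝ)
    (heig : ∀ x i, a ≤ (hsym x).eigenvalues i)
    (δ : ℝ) (hδ : 0 < δ) :
    ∃ C : ℝ, 0 < C ∧ ∃ C' : ℝ, 0 < C' ∧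
      ∀ r : ℝ, 0 < r → r < 1 → ∀ x y : EuclideanSpace ℝ (Fin d),
        ‖mexp (E x) r - mexp (E y) r‖ ≤ C * ‖toCLM (E x) - toCLM (E y)‖ * r ^ (a - δ) ∧
        C * ‖toCLM (E x) - toCLM (E y)‖ * r ^ (a - δ) ≤ C' * ‖x - y‖ * r ^ (a - δ) := by
  refine ⟨1 / δ, by positivity, 1 / δ * max L 1, by positivity, fun r hr0 hr1 x y => ⟨?_, ?_⟩⟩
  · calc ‖mexp (E x) r - mexp (E y) r‖
        ≤ |Real.log r| * ‖toCLM (E x) - toCLM (E y)‖ * r ^ a :=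
          norm_mexp_sub_mexp_le (hsym x) (hsym y) (heig x) (heig y) hr0 hr1.le
      _ = ‖toCLM (E x) - toCLM (E y)‖ * (|Real.log r| * r ^ a) := by ring
      _ ≤ ‖toCLM (E x) - toCLM (E y)‖ * (1 / δ * r ^ (a - δ)) :=
          mul_le_mul_of_nonneg_left (abs_log_mul_rpow_le hr0 hr1.le hδ) (norm_nonneg _)
      _ = 1 / δ * ‖toCLM (E x) - toCLM (E y)‖ * r ^ (a - δ) := by ring
  · have hLip' : ‖toCLM (E x) - toCLM (E y)‖ ≤ max L 1 * ‖x - y‖ :=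
      (hLip x y).trans (by gcongr; exact le_max_left L 1)
    calc 1 / δ * ‖toCLM (E x) - toCLM (E y)‖ * r ^ (a - δ)
        ≤ 1 / δ * (max L 1 * ‖x - y‖) * r ^ (a - δ) := by gcongr
      _ = 1 / δ * max L 1 * ‖x - y‖ * r ^ (a - δ) := by ring

theorem stmt2 (d : ℕ) (E : EuclideanSpace ℝ (Fin d) → Matrix (Fin d) (Fin d) ℝ)
    (hsym : ∀ x, (E x).IsHermitian) (L : ℝ)
    (hLip : ∀ x y, ‖toCLM (E x) - toCLM (E y)‖ ≤ L * ‖x - y‖)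
    (a : ℝ) (ha : 1/2 < a)
    (heig : ∀ x i, a ≤ (hsym x).eigenvalues i)
    (δ : ℝ) (hδ : 0 < δ) :
    ∃ C : ℝ, 0 < C ∧ ∃ C' : ℝ, 0 < C' ∧
      ∀ r : ℝ, 0 < r → r < 1 → ∀ x y : EuclideanSpace ℝ (Fin d),
        ‖mexp (E x) r - mexp (E y) r‖ ≤ C * ‖toCLM (E x) - toCLM (E y)‖ * r ^ (a - δ) ∧
        C * ‖toCLM (E x) - toCLM (E y)‖ * r ^ (a - δ) ≤ C' * ‖x - y‖ * r ^ (a - δ) :=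
  stmt2_general d E hsym L hLip a heig δ hδ
end

section
/- Let E(x) be a symmetric matrix with eigenvalues in [a, ∞), a > 1/2. There is a constant C > 0 such that for all x, ξ ∈ ℝ^d, θ ∈ S^{d−1}, and r > 0: |1 − e^{i⟨r^{E(x)}θ, ξ⟩} + i⟨r^{E(x)}θ, ξ⟩ 1_{(0,1)}(r)| ≤ C (1 + ‖ξ‖²)(1 ∧ r^{2a}). Moreover ∫₀^∞ (1 ∧ r^{2a}) r^{−2} dr < ∞. -/
open Matrix MeasureTheory
open scoped ENNReal

/-!
Diagonalising `E x = U D Uᴴ` gives `r^{E x} = U r^D Uᴴ`, so for `r ≤ 1` the operator norm of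
`r^{E x}` is `maxᵢ r^{λᵢ} ≤ r^a`, and `s = ⟨r^{E x} θ, ξ⟩` satisfies `s² ≤ r^{2a} ‖ξ‖²`.
For `r < 1` the bound then follows from `|1 - e^{is} + is| ≤ 2 s²`, and for `r ≥ 1` from
`|1 - e^{is}| ≤ 2`. The integral is finite because `2a - 2 > -1` near `0` and `r⁻²` is
integrable at infinity.
-/

open scoped Matrix.Norms.L2Operator

theorem Matrix.IsHermitian.norm_exp_smul_le {n : Type*} [Fintype n] [DecidableEq n]
    {A : Matrix n n ℝ} (hA : A.IsHermitian) {a t : ℝ} (heig : ∀ i, a ≤ hA.eigenvalues i)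
    (ht : t ≤ 0) : ‖NormedSpace.exp (t • A)‖ ≤ Real.exp (t * a) := by
  -- `NormedSpace.map_exp` needs a normed `ℚ`-algebra structure compatible with the L2 norm.
  let : NormedAlgebra ℚ (Matrix n n ℝ) := .restrictScalars ℚ ℝ _
  set U := hA.eigenvectorUnitary
  have hconj : Continuous (Unitary.conjStarAlgAut ℝ (Matrix n n ℝ) U) := by
    rw [show ⇑(Unitary.conjStarAlgAut ℝ (Matrix n n ℝ) U) =
        fun X => (U : Matrix n n ℝ) * X * star (U : Matrix n n ℝ) from
      funext (Unitary.conjStarAlgAut_apply U)]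
    fun_prop
  have hdiag : t • A = Unitary.conjStarAlgAut ℝ _ U (diagonal fun i => t * hA.eigenvalues i) := by
    conv_lhs => rw [hA.spectral_theorem]
    rw [← map_smul, ← diagonal_smul]
    rfl
  rw [hdiag, ← NormedSpace.map_exp _ hconj, exp_diagonal, Unitary.conjStarAlgAut_apply,
    ← Unitary.coe_star, CStarRing.norm_mul_coe_unitary, CStarRing.norm_coe_unitary_mul,
    l2_opNorm_diagonal, pi_norm_le_iff_of_nonneg (Real.exp_nonneg _)]
  intro i
  rw [Pi.coe_exp, ← Real.exp_eq_exp_ℝ, Real.norm_of_nonneg (Real.exp_nonneg _)]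
  exact Real.exp_le_exp.2 (mul_le_mul_of_nonpos_left (heig i) ht)

theorem norm_mexp_le_rpow {d : ℕ} {A : Matrix (Fin d) (Fin d) ℝ} (hA : A.IsHermitian) {a r : ℝ}
    (heig : ∀ i, a ≤ hA.eigenvalues i) (hr₀ : 0 < r) (hr₁ : r ≤ 1) : ‖mexp A r‖ ≤ r ^ a := by
  let : NormedAlgebra ℚ (Matrix (Fin d) (Fin d) ℝ) := .restrictScalars ℚ ℝ _
  have hcont : Continuous (toEuclideanCLM (n := Fin d) (𝕜 := ℝ)) :=
    AddMonoidHomClass.continuous_of_bound _ 1 fun X => by rw [l2_opNorm_toEuclideanCLM, one_mul]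
  have : mexp A r = toEuclideanCLM (𝕜 := ℝ) (NormedSpace.exp (Real.log r • A)) := by
    rw [NormedSpace.map_exp _ hcont, map_smul]
    rfl
  rw [this, l2_opNorm_toEuclideanCLM, Real.rpow_def_of_pos hr₀]
  exact hA.norm_exp_smul_le heig (Real.log_nonpos hr₀.le hr₁)

theorem sq_inner_mexp_apply_le {d : ℕ} {A : Matrix (Fin d) (Fin d) ℝ} (hA : A.IsHermitian)
    {a r : ℝ} (heig : ∀ i, a ≤ hA.eigenvalues i) (hr₀ : 0 < r) (hr₁ : r ≤ 1)
    (θ ξ : EuclideanSpace ℝ (Fin d)) :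
    (inner ℝ (mexp A r θ) ξ) ^ 2 ≤ r ^ (2 * a) * ‖θ‖ ^ 2 * ‖ξ‖ ^ 2 := by
  have h : |inner ℝ (mexp A r θ) ξ| ≤ r ^ a * ‖θ‖ * ‖ξ‖ :=
    calc |inner ℝ (mexp A r θ) ξ| ≤ ‖mexp A r θ‖ * ‖ξ‖ := abs_real_inner_le_norm _ _
      _ ≤ r ^ a * ‖θ‖ * ‖ξ‖ := by
        gcongr
        exact (mexp A r).le_of_opNorm_le (norm_mexp_le_rpow hA heig hr₀ hr₁) θ
  calc (inner ℝ (mexp A r θ) ξ) ^ 2 ≤ (r ^ a * ‖θ‖ * ‖ξ‖) ^ 2 :=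
      sq_le_sq' (abs_le.1 h).1 (abs_le.1 h).2
    _ = r ^ (2 * a) * ‖θ‖ ^ 2 * ‖ξ‖ ^ 2 := by
      rw [mul_comm 2 a, Real.rpow_mul hr₀.le, Real.rpow_two]; ring

theorem Complex.norm_one_sub_exp_I_mul_ofReal_add_le (s : ℝ) :
    ‖1 - exp (I * s) + I * s‖ ≤ 2 * s ^ 2 := by
  rcases le_or_gt |s| 1 with hs | hs
  · have hIs : ‖I * s‖ = |s| := by simp
    calc ‖1 - exp (I * s) + I * s‖ = ‖exp (I * s) - 1 - I * s‖ := by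
          rw [← norm_neg]; congr 1; ring
      _ ≤ ‖I * s‖ ^ 2 := norm_exp_sub_one_sub_id_le (hIs.trans_le hs)
      _ ≤ 2 * s ^ 2 := by rw [hIs, sq_abs]; nlinarith [sq_nonneg s]
  · calc ‖1 - exp (I * s) + I * s‖ ≤ ‖1 - exp (I * s)‖ + ‖I * s‖ := norm_add_le _ _
      _ ≤ |s| + |s| := by
          rw [norm_sub_rev]
          gcongr
          · exact Real.norm_exp_I_mul_ofReal_sub_one_le
          · simp
      _ ≤ 2 * s ^ 2 := by nlinarith [sq_abs s]

theorem Complex.norm_one_sub_exp_I_mul_ofReal_le (s : ℝ) : ‖1 - exp (I * s)‖ ≤ 2 := by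
  calc ‖1 - exp (I * s)‖ ≤ ‖(1 : ℂ)‖ + ‖exp (I * s)‖ := norm_sub_le _ _
    _ = 2 := by rw [norm_exp_I_mul_ofReal]; norm_num

theorem lintegral_min_one_rpow_div_sq_lt_top {p : ℝ} (hp : 1 < p) :
    ∫⁻ r in Set.Ioi (0:ℝ), ENNReal.ofReal (min 1 (r ^ p) / r ^ 2) < ⊤ := by
  rw [← Set.Ioc_union_Ioi_eq_Ioi zero_le_one,
    lintegral_union measurableSet_Ioi (Set.Ioc_disjoint_Ioi le_rfl)]
  refine ENNReal.add_lt_top.2 ⟨?_, ?_⟩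
  · have hint : IntegrableOn (fun r : ℝ => r ^ (p - 2)) (Set.Ioc 0 1) :=
      (intervalIntegral.intervalIntegrable_rpow' (by linarith)).1
    refine (setLIntegral_mono' measurableSet_Ioc fun r hr => ?_).trans_lt hint.lintegral_lt_top
    rw [min_eq_right (Real.rpow_le_one hr.1.le hr.2 (by linarith)), Real.rpow_sub hr.1,
      Real.rpow_two]
  · have hint : IntegrableOn (fun r : ℝ => r ^ (-2 : ℝ)) (Set.Ioi 1) :=
      (integrableOn_Ioi_rpow_iff zero_lt_one).2 (by norm_num)
    refine (setLIntegral_mono' measurableSet_Ioi fun r hr => ?_).trans_lt hint.lintegral_lt_top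
    rw [min_eq_left (Real.one_le_rpow (Set.mem_Ioi.1 hr).le (by linarith)),
      Real.rpow_neg (by linarith [Set.mem_Ioi.1 hr]), Real.rpow_two, one_div]

theorem stmt9 (d : ℕ) (a : ℝ) (ha : 1/2 < a)
    (E : EuclideanSpace ℝ (Fin d) → Matrix (Fin d) (Fin d) ℝ)
    (hsym : ∀ x, (E x).IsHermitian)
    (heig : ∀ x i, a ≤ (hsym x).eigenvalues i) :
    (∃ C : ℝ, 0 < C ∧ ∀ (x ξ θ : EuclideanSpace ℝ (Fin d)), ‖θ‖ = 1 → ∀ r : ℝ, 0 < r →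
      ‖(1 - Complex.exp (Complex.I * ((inner ℝ (mexp (E x) r θ) ξ : ℝ) : ℂ)) +
          (Set.Ioo (0:ℝ) 1).indicator
            (fun _ => Complex.I * ((inner ℝ (mexp (E x) r θ) ξ : ℝ) : ℂ)) r)‖
        ≤ C * (1 + ‖ξ‖ ^ 2) * min 1 (r ^ (2 * a))) ∧
    ∫⁻ r in Set.Ioi (0:ℝ), ENNReal.ofReal (min 1 (r ^ (2 * a)) / r ^ 2) < ⊤ := by
  refine ⟨⟨2, two_pos, fun x ξ θ hθ r hr => ?_⟩,
    lintegral_min_one_rpow_div_sq_lt_top (by linarith)⟩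
  set s := inner ℝ (mexp (E x) r θ) ξ
  rcases lt_or_ge r 1 with hr₁ | hr₁
  · have hs := sq_inner_mexp_apply_le (hsym x) (heig x) hr hr₁.le θ ξ
    rw [hθ, one_pow, mul_one] at hs
    rw [Set.indicator_of_mem (show r ∈ Set.Ioo 0 1 from ⟨hr, hr₁⟩),
      min_eq_right (Real.rpow_le_one hr.le hr₁.le (by linarith))]
    calc _ ≤ 2 * s ^ 2 := Complex.norm_one_sub_exp_I_mul_ofReal_add_le s
      _ ≤ 2 * (1 + ‖ξ‖ ^ 2) * r ^ (2 * a) := by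
        nlinarith [Real.rpow_nonneg hr.le (2 * a)]
  · rw [Set.indicator_of_notMem (fun h => h.2.not_ge hr₁), add_zero,
      min_eq_left (Real.one_le_rpow hr₁ (by linarith)), mul_one]
    nlinarith [Complex.norm_one_sub_exp_I_mul_ofReal_le s, sq_nonneg ‖ξ‖]
end

section
/- Let E be a symmetric invertible d×d matrix with eigenvalues in [λ, Λ] where λ > 0. Every ξ ∈ ℝ^d \ {0} has a unique representation ξ = τ(ξ)^E ℓ(ξ) with τ(ξ) > 0 and ℓ(ξ) ∈ S^{d−1} (generalized polar coordinates). Then there exist constants C₁, C₂, C₃, C₄ > 0 such that: (i) for ‖ξ‖ ≤ 1, C₁‖ξ‖^{1/λ} ≤ τ(ξ) ≤ C₂‖ξ‖^{1/Λ}; (ii) for ‖ξ‖ ≥ 1, C₃‖ξ‖^{1/Λ} ≤ τ(ξ) ≤ C₄‖ξ‖^{1/λ}. -/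
open Matrix MeasureTheory
open scoped ENNReal

/-!
Diagonalise `E` in an orthonormal eigenbasis: `r^E` multiplies the `i`-th coordinate by
`r^{μᵢ}` with `μᵢ ∈ [λ, Λ]`, so `‖r^E θ‖` lies between `r^Λ` and `r^λ` for `r ≤ 1` and between
`r^λ` and `r^Λ` for `r ≥ 1` when `‖θ‖ = 1`. Applied to `ξ = τ(ξ)^E ℓ(ξ)` and inverted, these
give the bounds with all constants equal to `1`.
-/

open scoped InnerProductSpace

theorem NormedSpace.exp_apply_of_apply_eq_smul {V : Type*} [NormedAddCommGroup V]
    [NormedSpace ℝ V] [CompleteSpace V] {T : V →L[ℝ] V} {v : V} {c : ℝ} (h : T v = c • v) :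
    NormedSpace.exp T v = Real.exp c • v := by
  have hpow (n : ℕ) : (T ^ n) v = c ^ n • v := by
    induction n with
    | zero => simp
    | succ n ih => rw [pow_succ, mul_apply_eq_comp, h, map_smul, ih, smul_smul, pow_succ']
  have hT := (NormedSpace.exp_series_hasSum_exp' (𝕂 := ℝ) T).mapL (ContinuousLinearMap.apply ℝ V v)
  have hc := (NormedSpace.exp_series_hasSum_exp' (𝕂 := ℝ) c).smul_const v
  simp only [ContinuousLinearMap.apply_apply, _root_.smul_apply, hpow, smul_smul, smul_eq_mul]
    at hT hc
  rw [Real.exp_eq_exp_ℝ]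
  exact hT.unique hc

section
variable {𝕜 E ι : Type*} [RCLike 𝕜] [NormedAddCommGroup E] [InnerProductSpace 𝕜 E] [Fintype ι]
  (b : OrthonormalBasis ι 𝕜 E) {f : E →ₗ[𝕜] E} {μ : ι → 𝕜}

theorem OrthonormalBasis.inner_map_of_apply_eq_smul (hf : ∀ i, f (b i) = μ i • b i) (x : E)
    (i : ι) : ⟪b i, f x⟫_𝕜 = μ i * ⟪b i, x⟫_𝕜 := by
  classical
  conv_lhs => rw [← b.sum_repr x]
  simp [map_sum, hf, inner_sum, inner_smul_right, b.inner_eq_ite, b.repr_apply_apply, mul_comm]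

theorem OrthonormalBasis.norm_map_sq_of_apply_eq_smul (hf : ∀ i, f (b i) = μ i • b i) (x : E) :
    ‖f x‖ ^ 2 = ∑ i, ‖μ i‖ ^ 2 * ‖⟪b i, x⟫_𝕜‖ ^ 2 := by
  simp only [← b.sum_sq_norm_inner_right (f x), b.inner_map_of_apply_eq_smul hf, norm_mul, mul_pow]

theorem OrthonormalBasis.mul_norm_le_norm_map_of_apply_eq_smul (hf : ∀ i, f (b i) = μ i • b i)
    {c : ℝ} (hc : 0 ≤ c) (hμ : ∀ i, c ≤ ‖μ i‖) (x : E) : c * ‖x‖ ≤ ‖f x‖ := by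
  refine le_of_sq_le_sq ?_ (norm_nonneg _)
  rw [mul_pow, ← b.sum_sq_norm_inner_right x, Finset.mul_sum, b.norm_map_sq_of_apply_eq_smul hf]
  gcongr with i
  exact hμ i

theorem OrthonormalBasis.norm_map_le_mul_norm_of_apply_eq_smul (hf : ∀ i, f (b i) = μ i • b i)
    {C : ℝ} (hC : 0 ≤ C) (hμ : ∀ i, ‖μ i‖ ≤ C) (x : E) : ‖f x‖ ≤ C * ‖x‖ := by
  refine le_of_sq_le_sq ?_ (by positivity)
  rw [mul_pow, ← b.sum_sq_norm_inner_right x, Finset.mul_sum, b.norm_map_sq_of_apply_eq_smul hf]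
  gcongr with i
  exact hμ i

end

section
variable {d : ℕ} {E : Matrix (Fin d) (Fin d) ℝ} (hE : E.IsHermitian)

theorem toCLM_eigenvectorBasis (i : Fin d) :
    toCLM E (hE.eigenvectorBasis i) = hE.eigenvalues i • hE.eigenvectorBasis i :=
  congrArg (WithLp.toLp 2) (hE.mulVec_eigenvectorBasis i)

theorem mexp_eigenvectorBasis {r : ℝ} (hr : 0 < r) (i : Fin d) :
    mexp E r (hE.eigenvectorBasis i) = r ^ hE.eigenvalues i • hE.eigenvectorBasis i := by
  rw [Real.rpow_def_of_pos hr]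
  apply NormedSpace.exp_apply_of_apply_eq_smul
  rw [_root_.smul_apply, toCLM_eigenvectorBasis hE, smul_smul]

theorem norm_mexp_bounds {r a b : ℝ} (hr : 0 < r) (ha : 0 ≤ a) (hb : 0 ≤ b)
    (hab : ∀ i, a ≤ r ^ hE.eigenvalues i ∧ r ^ hE.eigenvalues i ≤ b)
    (x : EuclideanSpace ℝ (Fin d)) : a * ‖x‖ ≤ ‖mexp E r x‖ ∧ ‖mexp E r x‖ ≤ b * ‖x‖ := by
  have hf := mexp_eigenvectorBasis hE hr
  have hnorm (i : Fin d) : ‖r ^ hE.eigenvalues i‖ = r ^ hE.eigenvalues i :=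
    Real.norm_of_nonneg (by positivity)
  exact ⟨hE.eigenvectorBasis.mul_norm_le_norm_map_of_apply_eq_smul (f := (mexp E r).toLinearMap)
      hf ha (fun i => (hnorm i).symm ▸ (hab i).1) x,
    hE.eigenvectorBasis.norm_map_le_mul_norm_of_apply_eq_smul (f := (mexp E r).toLinearMap)
      hf hb (fun i => (hnorm i).symm ▸ (hab i).2) x⟩

variable {lam Lam : ℝ} (hlo : ∀ i, lam ≤ hE.eigenvalues i) (hhi : ∀ i, hE.eigenvalues i ≤ Lam)
include hlo hhi

theorem norm_mexp_bounds_of_le_one {r : ℝ} (hr₀ : 0 < r) (hr₁ : r ≤ 1)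
    (x : EuclideanSpace ℝ (Fin d)) :
    r ^ Lam * ‖x‖ ≤ ‖mexp E r x‖ ∧ ‖mexp E r x‖ ≤ r ^ lam * ‖x‖ :=
  norm_mexp_bounds hE hr₀ (by positivity) (by positivity) (fun i =>
    ⟨Real.rpow_le_rpow_of_exponent_ge hr₀ hr₁ (hhi i),
      Real.rpow_le_rpow_of_exponent_ge hr₀ hr₁ (hlo i)⟩) x

theorem norm_mexp_bounds_of_one_le {r : ℝ} (hr₁ : 1 ≤ r) (x : EuclideanSpace ℝ (Fin d)) :
    r ^ lam * ‖x‖ ≤ ‖mexp E r x‖ ∧ ‖mexp E r x‖ ≤ r ^ Lam * ‖x‖ :=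
  norm_mexp_bounds hE (one_pos.trans_le hr₁) (by positivity) (by positivity) (fun i =>
    ⟨Real.rpow_le_rpow_of_exponent_le hr₁ (hlo i),
      Real.rpow_le_rpow_of_exponent_le hr₁ (hhi i)⟩) x

end

theorem rpow_one_div_bounds_of_rpow_bounds {r N a b : ℝ} (hr : 0 < r) (ha : 0 < a) (hb : 0 < b)
    (hsmall : r ≤ 1 → r ^ b ≤ N ∧ N ≤ r ^ a) (hlarge : 1 ≤ r → r ^ a ≤ N ∧ N ≤ r ^ b) :
    (N ≤ 1 → N ^ (1 / a) ≤ r ∧ r ≤ N ^ (1 / b)) ∧ (1 ≤ N → N ^ (1 / b) ≤ r ∧ r ≤ N ^ (1 / a)) := by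
  have hN : 0 ≤ N := by
    rcases le_total r 1 with h | h
    · exact (Real.rpow_nonneg hr.le b).trans (hsmall h).1
    · exact (Real.rpow_nonneg hr.le a).trans (hlarge h).1
  simp only [one_div, Real.rpow_inv_le_iff_of_pos hN hr.le ha,
    Real.rpow_inv_le_iff_of_pos hN hr.le hb, Real.le_rpow_inv_iff_of_pos hr.le hN ha,
    Real.le_rpow_inv_iff_of_pos hr.le hN hb]
  constructor
  · intro hN₁
    refine (hsmall ?_).symm
    by_contra! hr₁
    exact (Real.one_lt_rpow hr₁ ha).not_ge ((hlarge hr₁.le).1.trans hN₁)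
  · intro hN₁
    refine (hlarge ?_).symm
    by_contra! hr₁
    exact (Real.rpow_lt_one hr.le hr₁ ha).not_ge (hN₁.trans (hsmall hr₁.le).2)

theorem stmt13_general (d : ℕ) (E : Matrix (Fin d) (Fin d) ℝ) (hE : E.IsHermitian)
    (lam Lam : ℝ) (hlam : 0 < lam)
    (hlo : ∀ i, lam ≤ hE.eigenvalues i) (hhi : ∀ i, hE.eigenvalues i ≤ Lam)
    (τ : EuclideanSpace ℝ (Fin d) → ℝ)
    (l : EuclideanSpace ℝ (Fin d) → EuclideanSpace ℝ (Fin d))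
    (hpolar : ∀ ξ : EuclideanSpace ℝ (Fin d), ξ ≠ 0 →
      0 < τ ξ ∧ ‖l ξ‖ = 1 ∧ mexp E (τ ξ) (l ξ) = ξ) :
    ∃ C₁ C₂ C₃ C₄ : ℝ, 0 < C₁ ∧ 0 < C₂ ∧ 0 < C₃ ∧ 0 < C₄ ∧
      ∀ ξ : EuclideanSpace ℝ (Fin d), ξ ≠ 0 →
        (‖ξ‖ ≤ 1 → C₁ * ‖ξ‖ ^ (1 / lam) ≤ τ ξ ∧ τ ξ ≤ C₂ * ‖ξ‖ ^ (1 / Lam)) ∧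
        (1 ≤ ‖ξ‖ → C₃ * ‖ξ‖ ^ (1 / Lam) ≤ τ ξ ∧ τ ξ ≤ C₄ * ‖ξ‖ ^ (1 / lam)) := by
  refine ⟨1, 1, 1, 1, one_pos, one_pos, one_pos, one_pos, fun ξ hξ => ?_⟩
  obtain ⟨hτ, hl, hξ_eq⟩ := hpolar ξ hξ
  have : Nonempty (Fin d) := not_isEmpty_iff.mp fun _ => hξ (Subsingleton.elim _ _)
  have hLam : 0 < Lam := hlam.trans_le ((hlo (Classical.arbitrary _)).trans (hhi _))
  simp only [one_mul]
  refine rpow_one_div_bounds_of_rpow_bounds hτ hlam hLam (fun hr₁ => ?_) (fun hr₁ => ?_)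
  · simpa [hξ_eq, hl] using norm_mexp_bounds_of_le_one hE hlo hhi hτ hr₁ (l ξ)
  · simpa [hξ_eq, hl] using norm_mexp_bounds_of_one_le hE hlo hhi hr₁ (l ξ)

theorem stmt13 (d : ℕ) (E : Matrix (Fin d) (Fin d) ℝ) (hE : E.IsHermitian)
    (lam Lam : ℝ) (hlam : 0 < lam)
    (hlo : ∀ i, lam ≤ hE.eigenvalues i) (hhi : ∀ i, hE.eigenvalues i ≤ Lam)
    (τ : EuclideanSpace ℝ (Fin d) → ℝ)
    (l : EuclideanSpace ℝ (Fin d) → EuclideanSpace ℝ (Fin d))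
    (hpolar : ∀ ξ : EuclideanSpace ℝ (Fin d), ξ ≠ 0 →
      0 < τ ξ ∧ ‖l ξ‖ = 1 ∧ mexp E (τ ξ) (l ξ) = ξ)
    (huniq : ∀ ξ : EuclideanSpace ℝ (Fin d), ξ ≠ 0 →
      ∀ (s : ℝ) (θ : EuclideanSpace ℝ (Fin d)), 0 < s → ‖θ‖ = 1 →
        mexp E s θ = ξ → s = τ ξ ∧ θ = l ξ) :
    ∃ C₁ C₂ C₃ C₄ : ℝ, 0 < C₁ ∧ 0 < C₂ ∧ 0 < C₃ ∧ 0 < C₄ ∧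
      ∀ ξ : EuclideanSpace ℝ (Fin d), ξ ≠ 0 →
        (‖ξ‖ ≤ 1 → C₁ * ‖ξ‖ ^ (1 / lam) ≤ τ ξ ∧ τ ξ ≤ C₂ * ‖ξ‖ ^ (1 / Lam)) ∧
        (1 ≤ ‖ξ‖ → C₃ * ‖ξ‖ ^ (1 / Lam) ≤ τ ξ ∧ τ ξ ≤ C₄ * ‖ξ‖ ^ (1 / lam)) :=
  stmt13_general d E hE lam Lam hlam hlo hhi τ l hpolar
end
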